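/- Let p be an odd prime such that the Pisano period l_p equals 2p+2 and β(p) = 2. Then the cyclic code C = ⟨f(x)⟩ of length 2p+2 over F_p generated by the Fibonacci polynomial f(x) has parameters [2p+2, 2, 2p] and meets the Griesmer bound with equality: its length satisfies n = Σ_{i=0}^{k−1} ⌈d/p^i⌉, i.e. 2p+2 = ⌈2p⌉ + ⌈2p/p⌉; hence C is an optimal code. -/

import Mathlib

open Polynomial

/-- The Fibonacci sequence over `ZMod p`: `F 0 = 0`, `F 1 = 1`, `F (n+2) = F (n+1) + F n`. -/
def fibMod (p : ℕ) : ℕ → ZMod p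
  | 0 => 0
  | 1 => 1
  | n + 2 => fibMod p (n + 1) + fibMod p n

/-- The Pisano period of `p`: the least `t > 0` with `F t = F 0 = 0` and `F (t+1) = F 1 = 1`. -/
noncomputable def pisano (p : ℕ) : ℕ :=
  sInf {t : ℕ | 0 < t ∧ fibMod p t = 0 ∧ fibMod p (t + 1) = 1}

/-- `β(p)`: the number of indices `0 ≤ i < l_p` with `F i = 0` in `ZMod p`. -/
noncomputable def betaP (p : ℕ) : ℕ :=
  ((Finset.range (pisano p)).filter fun i => fibMod p i = 0).card

/-- The Fibonacci polynomial `f(x) = ∑_{i=0}^{l_p - 1} F_i x^i` over `ZMod p`. -/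
noncomputable def fibPoly (p : ℕ) : (ZMod p)[X] :=
  ∑ i ∈ Finset.range (pisano p), C (fibMod p i) * X ^ i

/-- Cyclic shift of a vector of length `l`: the shift `v ↦ (v_{l-1}, v_0, …, v_{l-2})`,
which corresponds to multiplication by `x` modulo `x^l - 1` on coefficient vectors. -/
def cyclicShift (p l : ℕ) (v : Fin l → ZMod p) : Fin l → ZMod p :=
  fun i => v ⟨((i : ℕ) + (l - 1)) % l, Nat.mod_lt _ i.pos⟩

/-- The coefficient vector of length `l` of a polynomial. -/
def polyVec (p l : ℕ) (g : (ZMod p)[X]) : Fin l → ZMod p := fun i => g.coeff i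

/-- The cyclic code of length `l` generated by `g`: the ideal generated by the image of `g`
in `F_p[x]/(x^l - 1)`, identified with the subspace of `F_p^l` of coefficient vectors via
`a_0 + a_1 x + ⋯ + a_{l-1} x^{l-1} ↦ (a_0, …, a_{l-1})`; equivalently (since multiplication
by `x` is the cyclic shift), the `F_p`-span of all cyclic shifts of the coefficient vector
of `g`. -/
noncomputable def cyclicCode (p l : ℕ) (g : (ZMod p)[X]) :
    Submodule (ZMod p) (Fin l → ZMod p) :=
  Submodule.span (ZMod p) {w | ∃ k : ℕ, w = (cyclicShift p l)^[k] (polyVec p l g)}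

/-- The cyclic code of length `l` generated by the Fibonacci polynomial `f(x)`. -/
noncomputable def fibCode (p l : ℕ) : Submodule (ZMod p) (Fin l → ZMod p) :=
  cyclicCode p l (fibPoly p)

/-!
The codewords of `⟨f(x)⟩` are exactly the windows `(G 0, …, G (l-1))` of sequences `G` over
`𝔽_p` obeying the Fibonacci recurrence: the code is spanned by `f` and `x f`, because
`(x² + x - 1) f ≡ 0 mod xˡ - 1`, and each of them is a window of a shifted Fibonacci sequence.
A nonzero such `G` cannot vanish at two consecutive indices, so if `G i = 0` then
`G (i + n) = G (i + 1) F n` vanishes exactly where `F n` does; shifting by the first zero of `G`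
injects its zeros in `[0, l)` into those of `F`. Hence every nonzero codeword has weight at least
`l - β(p)`, attained by `f` itself, and `f`, `x f` are independent as they start with `(0, 1)`
and `(1, 0)`.
-/

open Finset

section FibLike

variable {R : Type*} [CommRing R] {G : ℕ → R}

def IsFibLike (G : ℕ → R) : Prop := ∀ n, G (n + 2) = G (n + 1) + G n

theorem isFibLike_natCast_fib : IsFibLike (fun n => (Nat.fib n : R)) := fun n => by
  simp only [Nat.fib_add_two, Nat.cast_add, add_comm]

namespace IsFibLike

theorem add_add_one (hG : IsFibLike G) (m n : ℕ) :
    G (m + n + 1) = G m * Nat.fib n + G (m + 1) * Nat.fib (n + 1) := by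
  induction n using Nat.twoStepInduction with
  | zero => simp
  | one =>
    rw [show m + 1 + 1 = m + 2 from rfl, hG]
    simp [add_comm]
  | more n ih₁ ih₂ =>
    rw [show m + (n + 2) + 1 = m + n + 1 + 2 by ring, hG,
      show m + n + 1 + 1 = m + (n + 1) + 1 by ring, ih₁, ih₂]
    simp only [Nat.fib_add_two, Nat.cast_add]
    ring

theorem periodic (hG : IsFibLike G) {l : ℕ} (h₀ : (Nat.fib l : R) = 0)
    (h₁ : (Nat.fib (l + 1) : R) = 1) : Function.Periodic G l := by
  intro n
  cases l with
  | zero => rfl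
  | succ l =>
    have hl : (Nat.fib l : R) = 1 := by
      rwa [Nat.fib_add_two, Nat.cast_add, h₀, add_zero] at h₁
    rw [← add_assoc, hG.add_add_one, hl, h₀]
    ring

theorem add_sub_one_add_sub_one (hG : IsFibLike G) {l : ℕ} (hper : Function.Periodic G l)
    (hl : 0 < l) (n : ℕ) : G (n + (l - 1) + (l - 1)) = G n - G (n + (l - 1)) := by
  have h := hG (n + (l - 1) + (l - 1))
  rw [show n + (l - 1) + (l - 1) + 2 = n + l + l by omega, hper, hper,
    show n + (l - 1) + (l - 1) + 1 = n + (l - 1) + l by omega, hper] at h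
  rw [h]
  ring

theorem eq_zero_of_consecutive_zeros (hG : IsFibLike G) {i : ℕ} (h₀ : G i = 0)
    (h₁ : G (i + 1) = 0) : G = 0 := by
  induction i with
  | zero =>
    funext n
    induction n using Nat.twoStepInduction with
    | zero => exact h₀
    | one => exact h₁
    | more n ih₁ ih₂ =>
      rw [hG, ih₁, ih₂]
      simp
  | succ i ih =>
    refine ih ?_ h₀
    have h := hG i
    rw [show i + 2 = i + 1 + 1 from rfl, h₀, h₁, zero_add] at h
    exact h.symm

theorem add_eq_mul_fib (hG : IsFibLike G) {i : ℕ} (h₀ : G i = 0) (n : ℕ) :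
    G (i + n) = G (i + 1) * Nat.fib n := by
  cases n with
  | zero => simp [h₀]
  | succ n => rw [← add_assoc, hG.add_add_one, h₀, zero_mul, zero_add]

theorem card_zeros_le [NoZeroDivisors R] [DecidableEq R] (hG : IsFibLike G) (hG₀ : G ≠ 0)
    (l : ℕ) : #{i ∈ range l | G i = 0} ≤ #{i ∈ range l | (Nat.fib i : R) = 0} := by
  set Z := {i ∈ range l | G i = 0}
  rcases Z.eq_empty_or_nonempty with hZ | hZ
  · simp [hZ]
  have hmin := Z.min'_mem hZ
  simp only [Z, mem_filter] at hmin
  have hnext : G (Z.min' hZ + 1) ≠ 0 := fun h => hG₀ (hG.eq_zero_of_consecutive_zeros hmin.2 h)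
  refine card_le_card_of_injOn (· - Z.min' hZ) (fun i hi => ?_) (fun i hi j hj hij => ?_)
  · have hle := Z.min'_le i hi
    simp only [Z, coe_filter, Set.mem_ofPred_eq, mem_range] at hi ⊢
    refine ⟨by omega, ?_⟩
    have := hG.add_eq_mul_fib hmin.2 (i - Z.min' hZ)
    rw [Nat.add_sub_cancel' hle, hi.2] at this
    exact (mul_eq_zero.mp this.symm).resolve_left hnext
  · have := Z.min'_le i hi
    have := Z.min'_le j hj
    simp only at hij
    omega

end IsFibLike

end FibLike

theorem Submodule.span_iterate_eq_span_pair {R M : Type*} [Ring R] [AddCommGroup M] [Module R M]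
    (T : Module.End R M) {v : M} (hv : T (T v) = v - T v) :
    Submodule.span R {w | ∃ k : ℕ, w = T^[k] v} = Submodule.span R {v, T v} := by
  apply le_antisymm
  · rw [Submodule.span_le]
    rintro _ ⟨k, rfl⟩
    induction k using Nat.twoStepInduction with
    | zero => exact Submodule.subset_span (Set.mem_insert _ _)
    | one => exact Submodule.subset_span (Set.mem_insert_of_mem _ rfl)
    | more k ih₁ ih₂ =>
      have h : T^[k + 2] v = T^[k] v - T^[k + 1] v := by
        rw [Function.iterate_add_apply, show T^[2] v = v - T v from hv, ← Module.End.pow_apply,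
          map_sub, Module.End.pow_apply, Module.End.pow_apply, ← Function.iterate_succ_apply]
      rw [h]
      exact sub_mem ih₁ ih₂
  · rw [Submodule.span_le]
    rintro _ (rfl | rfl)
    exacts [Submodule.subset_span ⟨0, rfl⟩, Submodule.subset_span ⟨1, rfl⟩]

theorem hammingNorm_add_card_zeros {R : Type*} [Zero R] [DecidableEq R] (G : ℕ → R) (l : ℕ) :
    hammingNorm (fun i : Fin l => G i) + #{i ∈ range l | G i = 0} = l := by
  rw [← Nat.Iio_eq_range, ← Fin.map_valEmbedding_univ, filter_map, card_map, hammingNorm, add_comm]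
  exact (card_filter_add_card_filter_not _).trans (card_fin l)

section FibCode

variable {p : ℕ}

theorem fibMod_eq_natCast_fib (n : ℕ) : fibMod p n = Nat.fib n := by
  induction n using Nat.twoStepInduction with
  | zero => simp [fibMod]
  | one => simp [fibMod]
  | more n ih₁ ih₂ =>
    rw [fibMod, ih₁, ih₂, Nat.fib_add_two, Nat.cast_add, add_comm]

theorem natCast_fib_pisano (h : 0 < pisano p) :
    (Nat.fib (pisano p) : ZMod p) = 0 ∧ (Nat.fib (pisano p + 1) : ZMod p) = 1 := by
  obtain ⟨-, h₀, h₁⟩ : 0 < pisano p ∧ fibMod p (pisano p) = 0 ∧ fibMod p (pisano p + 1) = 1 :=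
    Nat.sInf_mem (Nat.nonempty_of_pos_sInf h)
  rw [fibMod_eq_natCast_fib] at h₀ h₁
  exact ⟨h₀, h₁⟩

theorem periodic_natCast_fib (h : 0 < pisano p) :
    Function.Periodic (fun n => (Nat.fib n : ZMod p)) (pisano p) :=
  isFibLike_natCast_fib.periodic (natCast_fib_pisano h).1 (natCast_fib_pisano h).2

theorem natCast_fib_pisano_sub_one (h : 0 < pisano p) :
    (Nat.fib (pisano p - 1) : ZMod p) = 1 := by
  obtain ⟨h₀, h₁⟩ := natCast_fib_pisano h
  have h₂ := isFibLike_natCast_fib (R := ZMod p) (pisano p - 1)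
  simp only [show pisano p - 1 + 2 = pisano p + 1 by omega, Nat.sub_add_cancel h, h₀, h₁,
    zero_add] at h₂
  exact h₂.symm

theorem cyclicShift_of_periodic {l : ℕ} {G : ℕ → ZMod p} (hG : Function.Periodic G l) :
    cyclicShift p l (fun i : Fin l => G i) = fun i : Fin l => G ((i : ℕ) + (l - 1)) :=
  funext fun _ => hG.map_mod_nat _

def cyclicShiftₗ (p l : ℕ) : Module.End (ZMod p) (Fin l → ZMod p) where
  toFun := cyclicShift p l
  map_add' _ _ := rfl
  map_smul' _ _ := rfl

@[simp]
theorem cyclicShiftₗ_apply (l : ℕ) (v : Fin l → ZMod p) :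
    cyclicShiftₗ p l v = cyclicShift p l v :=
  rfl

theorem polyVec_fibPoly :
    polyVec p (pisano p) (fibPoly p) = fun i : Fin (pisano p) => (Nat.fib i : ZMod p) := by
  funext i
  simp [polyVec, fibPoly, fibMod_eq_natCast_fib]

theorem fibCode_eq_span_pair (h : 0 < pisano p) :
    fibCode p (pisano p) = Submodule.span (ZMod p)
      {fun i : Fin (pisano p) => (Nat.fib i : ZMod p),
        fun i : Fin (pisano p) => (Nat.fib ((i : ℕ) + (pisano p - 1)) : ZMod p)} := by
  have hper := periodic_natCast_fib h
  have hshift := cyclicShift_of_periodic hper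
  have hshift₂ := cyclicShift_of_periodic (hper.add_const (pisano p - 1))
  rw [fibCode, cyclicCode, polyVec_fibPoly, ← hshift]
  refine Submodule.span_iterate_eq_span_pair (cyclicShiftₗ p (pisano p)) ?_
  simp only [cyclicShiftₗ_apply]
  rw [hshift, hshift₂]
  funext i
  exact isFibLike_natCast_fib.add_sub_one_add_sub_one hper h i

theorem betaP_eq_card_zeros : betaP p = #{i ∈ range (pisano p) | (Nat.fib i : ZMod p) = 0} := by
  simp only [betaP, fibMod_eq_natCast_fib]

variable [Fact p.Prime]

theorem finrank_fibCode (h : 2 ≤ pisano p) :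
    Module.finrank (ZMod p) (fibCode p (pisano p)) = 2 := by
  obtain ⟨h₀, -⟩ := natCast_fib_pisano (p := p) (by omega)
  have h₁ := natCast_fib_pisano_sub_one (p := p) (by omega)
  rw [fibCode_eq_span_pair (by omega), ← Matrix.range_cons_cons_empty,
    finrank_span_eq_card, Fintype.card_fin]
  refine LinearIndependent.pair_iff.mpr fun s t hst => ⟨?_, ?_⟩
  · have := congrFun hst ⟨1, h⟩
    simpa [show 1 + (pisano p - 1) = pisano p by omega, h₀] using this
  · have := congrFun hst ⟨0, by omega⟩
    simpa [h₁] using this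

theorem fibCode_isLeast_weight (h : 2 ≤ pisano p) :
    IsLeast {w | ∃ v ∈ fibCode p (pisano p), v ≠ 0 ∧ hammingNorm v = w} (pisano p - betaP p) := by
  rw [fibCode_eq_span_pair (by omega), betaP_eq_card_zeros]
  refine ⟨⟨_, Submodule.subset_span (Set.mem_insert _ _), fun h₀ => ?_, ?_⟩, ?_⟩
  · simpa using congrFun h₀ ⟨1, h⟩
  · have := hammingNorm_add_card_zeros (fun n => (Nat.fib n : ZMod p)) (pisano p)
    omega
  rintro _ ⟨u, hu, hu₀, rfl⟩
  obtain ⟨a, b, rfl⟩ := Submodule.mem_span_pair.mp hu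
  set G : ℕ → ZMod p := fun n => a * Nat.fib n + b * Nat.fib (n + (pisano p - 1))
  have hG : IsFibLike G := fun n => by
    simp only [G, show n + 2 + (pisano p - 1) = n + (pisano p - 1) + 2 by omega,
      show n + 1 + (pisano p - 1) = n + (pisano p - 1) + 1 by omega, isFibLike_natCast_fib _]
    ring
  have hwindow : a • (fun i : Fin (pisano p) => (Nat.fib i : ZMod p))
      + b • (fun i : Fin (pisano p) => (Nat.fib ((i : ℕ) + (pisano p - 1)) : ZMod p))
      = fun i : Fin (pisano p) => G i := rfl
  have hG₀ : G ≠ 0 := fun hG₀ => hu₀ (by rw [hwindow, hG₀]; rfl)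
  have := hammingNorm_add_card_zeros G (pisano p)
  have := hG.card_zeros_le hG₀ (pisano p)
  rw [hwindow]
  omega

end FibCode

theorem two_mul_add_two_eq_sum_ceil {p : ℕ} (hp : p ≠ 0) :
    (2 * p + 2 : ℤ) = ∑ i ∈ range 2, ⌈(2 * p : ℚ) / (p : ℚ) ^ i⌉ := by
  simp only [sum_range_succ, range_one, sum_singleton, pow_zero, pow_one, div_one]
  rw [mul_div_assoc, div_self (Nat.cast_ne_zero.mpr hp), mul_one]
  have h : ⌈(2 * p : ℚ)⌉ = 2 * p := mod_cast Int.ceil_natCast (2 * p)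
  rw [h, Int.ceil_ofNat]

theorem fibCode_optimal_general (p : ℕ) [Fact p.Prime]
    (hl : pisano p = 2 * p + 2) (hb : betaP p = 2) :
    Module.finrank (ZMod p) (fibCode p (2 * p + 2)) = 2 ∧
      IsLeast {w : ℕ | ∃ v ∈ fibCode p (2 * p + 2), v ≠ 0 ∧ hammingNorm v = w} (2 * p) ∧
      ((2 * p + 2 : ℤ) = ∑ i ∈ Finset.range 2, ⌈(2 * p : ℚ) / (p : ℚ) ^ i⌉) := by
  have hp := (Fact.out : p.Prime).pos
  have hl₂ : 2 ≤ pisano p := by omega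
  have hweight := fibCode_isLeast_weight hl₂
  rw [hl, hb, show 2 * p + 2 - 2 = 2 * p by omega] at hweight
  exact ⟨hl ▸ finrank_fibCode hl₂, hweight, two_mul_add_two_eq_sum_ceil hp.ne'⟩

/-- For an odd prime `p` with Pisano period `l_p = 2p + 2` and `β(p) = 2`,
the cyclic code `C = ⟨f(x)⟩` has parameters `[2p+2, 2, 2p]` and meets the Griesmer bound
with equality: `2p + 2 = ⌈2p/p⁰⌉ + ⌈2p/p¹⌉`; hence `C` is an optimal code. -/
theorem fibCode_optimal (p : ℕ) [Fact p.Prime] (hodd : Odd p)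
    (hl : pisano p = 2 * p + 2) (hb : betaP p = 2) :
    Module.finrank (ZMod p) (fibCode p (2 * p + 2)) = 2 ∧
      IsLeast {w : ℕ | ∃ v ∈ fibCode p (2 * p + 2), v ≠ 0 ∧ hammingNorm v = w} (2 * p) ∧
      ((2 * p + 2 : ℤ) = ∑ i ∈ Finset.range 2, ⌈(2 * p : ℚ) / (p : ℚ) ^ i⌉) :=
  fibCode_optimal_general p hl hb
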